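/- For every y₀ ∈ ℛ \ {0} and every T ∈ (0,∞), the minimal norm N(T,y₀) is finite and N(T,y₀) = sup{ ⟨exp(T·A)·y₀, z⟩ / ∫₀^T ‖B^⊤·exp((T−t)·A^⊤)·z‖ dt : z ∈ ℝⁿ such that the function t ↦ B^⊤·exp((T−t)·A^⊤)·z is not identically zero on (0,T) }. -/

import Mathlib

/-!
Setting: fix `n, m ≥ 1`, a matrix `A ∈ ℝ^{n×n}` and a nonzero matrix `B ∈ ℝ^{n×m}`.
States live in `EuclideanSpace ℝ (Fin n)` and control values in `EuclideanSpace ℝ (Fin m)`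
(so that all norms are the Euclidean ones).  For `y₀ ∈ ℝⁿ`, `t ≥ 0` and a control `u`,
the state is `y(t;y₀,u) = e^{tA} y₀ + ∫₀ᵗ e^{(t-s)A} B u(s) ds`.
-/

open MeasureTheory Set Matrix
open scoped ENNReal RealInnerProductSpace

noncomputable section

namespace ControlBBP

/-- Matrix–vector multiplication, regarded as a map between Euclidean spaces. -/
def mulVecE {a b : ℕ} (M : Matrix (Fin a) (Fin b) ℝ)
    (x : EuclideanSpace ℝ (Fin b)) : EuclideanSpace ℝ (Fin a) :=
  (EuclideanSpace.equiv (Fin a) ℝ).symm (M.mulVec (EuclideanSpace.equiv (Fin b) ℝ x))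

variable {n m : ℕ}

/-- `∫₀ᵀ e^{(T-s)A} B v(s) ds`, the state at time `T` starting from `0` with control `v`. -/
def reachOutput (A : Matrix (Fin n) (Fin n) ℝ) (B : Matrix (Fin n) (Fin m) ℝ)
    (T : ℝ) (v : ℝ → EuclideanSpace ℝ (Fin m)) : EuclideanSpace ℝ (Fin n) :=
  ∫ s in Ioc (0 : ℝ) T, mulVecE (NormedSpace.exp ((T - s) • A)) (mulVecE B (v s))

/-- The state `y(t; y₀, u) = e^{tA} y₀ + ∫₀ᵗ e^{(t-s)A} B u(s) ds`. -/
def state (A : Matrix (Fin n) (Fin n) ℝ) (B : Matrix (Fin n) (Fin m) ℝ)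
    (y0 : EuclideanSpace ℝ (Fin n)) (t : ℝ) (u : ℝ → EuclideanSpace ℝ (Fin m)) :
    EuclideanSpace ℝ (Fin n) :=
  mulVecE (NormedSpace.exp (t • A)) y0 + reachOutput A B t u

/-- The `L^∞(0,T;ℝ^m)`-norm of a control, valued in `[0,∞]`. -/
def supNorm (T : ℝ) (v : ℝ → EuclideanSpace ℝ (Fin m)) : ℝ≥0∞ :=
  eLpNorm v ⊤ (volume.restrict (Ioo (0 : ℝ) T))

/-- `v` is an admissible control for the minimal norm problem `(NP)^{T,y₀}`:
it is measurable, essentially bounded on `(0,T)`, and steers `y₀` to `0` at time `T`. -/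
def NPAdmissible (A : Matrix (Fin n) (Fin n) ℝ) (B : Matrix (Fin n) (Fin m) ℝ)
    (T : ℝ) (y0 : EuclideanSpace ℝ (Fin n)) (v : ℝ → EuclideanSpace ℝ (Fin m)) : Prop :=
  Measurable v ∧ supNorm T v < ⊤ ∧ state A B y0 T v = 0

/-- The minimal norm `N(T,y₀) ∈ [0,∞]` (with `inf ∅ = ∞`). -/
def Nmin (A : Matrix (Fin n) (Fin n) ℝ) (B : Matrix (Fin n) (Fin m) ℝ)
    (T : ℝ) (y0 : EuclideanSpace ℝ (Fin n)) : ℝ≥0∞ :=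
  ⨅ (v : ℝ → EuclideanSpace ℝ (Fin m)) (_ : NPAdmissible A B T y0 v), supNorm T v

/-- `v` is a minimal norm control for `(NP)^{T,y₀}`. -/
def IsMinNormControl (A : Matrix (Fin n) (Fin n) ℝ) (B : Matrix (Fin n) (Fin m) ℝ)
    (T : ℝ) (y0 : EuclideanSpace ℝ (Fin n)) (v : ℝ → EuclideanSpace ℝ (Fin m)) : Prop :=
  NPAdmissible A B T y0 v ∧ supNorm T v = Nmin A B T y0

/-- `(NP)^{T,y₀}` has the bang-bang property: every minimal norm control `v` satisfies
`‖v(t)‖ = N(T,y₀)` for a.e. `t ∈ (0,T)`. -/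
def NPBangBang (A : Matrix (Fin n) (Fin n) ℝ) (B : Matrix (Fin n) (Fin m) ℝ)
    (T : ℝ) (y0 : EuclideanSpace ℝ (Fin n)) : Prop :=
  ∀ v, IsMinNormControl A B T y0 v →
    ∀ᵐ t ∂(volume.restrict (Ioo (0 : ℝ) T)), ‖v t‖ = (Nmin A B T y0).toReal

/-- `ℛ`, the span of the columns of `B, AB, A²B, …, AⁿB`. -/
def reach (A : Matrix (Fin n) (Fin n) ℝ) (B : Matrix (Fin n) (Fin m) ℝ) :
    Submodule ℝ (EuclideanSpace ℝ (Fin n)) :=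
  Submodule.span ℝ
    {x | ∃ (k : ℕ) (j : Fin m), k ≤ n ∧ x = mulVecE (A ^ k * B) (EuclideanSpace.single j 1)}

/-- Membership in the constraint set `𝒰^M`: measurable and `‖u(t)‖ ≤ M` a.e. on `(0,∞)`. -/
def MemU (M : ℝ) (u : ℝ → EuclideanSpace ℝ (Fin m)) : Prop :=
  Measurable u ∧ ∀ᵐ t ∂(volume.restrict (Ioi (0 : ℝ))), ‖u t‖ ≤ M

/-- `u` is an admissible control for the minimal time problem `(TP)^{M,y₀}`. -/
def TPAdmissible (A : Matrix (Fin n) (Fin n) ℝ) (B : Matrix (Fin n) (Fin m) ℝ)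
    (M : ℝ) (y0 : EuclideanSpace ℝ (Fin n)) (u : ℝ → EuclideanSpace ℝ (Fin m)) : Prop :=
  MemU M u ∧ ∃ t : ℝ, 0 < t ∧ state A B y0 t u = 0

/-- The minimal time `T(M,y₀) ∈ (0,∞]` (with `inf ∅ = ∞`). -/
def minTime (A : Matrix (Fin n) (Fin n) ℝ) (B : Matrix (Fin n) (Fin m) ℝ)
    (M : ℝ) (y0 : EuclideanSpace ℝ (Fin n)) : ℝ≥0∞ :=
  ⨅ (t : ℝ) (_ : 0 < t ∧ ∃ u, MemU M u ∧ state A B y0 t u = 0), ENNReal.ofReal t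

/-- `u` is a minimal time control for `(TP)^{M,y₀}`: it lies in `𝒰^M` and
`y(T(M,y₀); y₀, u) = 0`. -/
def IsMinTimeControl (A : Matrix (Fin n) (Fin n) ℝ) (B : Matrix (Fin n) (Fin m) ℝ)
    (M : ℝ) (y0 : EuclideanSpace ℝ (Fin n)) (u : ℝ → EuclideanSpace ℝ (Fin m)) : Prop :=
  MemU M u ∧ state A B y0 (minTime A B M y0).toReal u = 0

/-- `(TP)^{M,y₀}` has the bang-bang property: every minimal time control `u` satisfies
`‖u(t)‖ = M` for a.e. `t ∈ (0, T(M,y₀))`. -/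
def TPBangBang (A : Matrix (Fin n) (Fin n) ℝ) (B : Matrix (Fin n) (Fin m) ℝ)
    (M : ℝ) (y0 : EuclideanSpace ℝ (Fin n)) : Prop :=
  ∀ u, IsMinTimeControl A B M y0 u →
    ∀ᵐ t ∂(volume.restrict (Ioo (0 : ℝ) (minTime A B M y0).toReal)), ‖u t‖ = M

/-- `N(∞,y₀) = inf_{T>0} N(T,y₀)`. -/
def Ninf (A : Matrix (Fin n) (Fin n) ℝ) (B : Matrix (Fin n) (Fin m) ℝ)
    (y0 : EuclideanSpace ℝ (Fin n)) : ℝ≥0∞ :=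
  ⨅ (T : ℝ) (_ : 0 < T), Nmin A B T y0

/-- `t ↦ B^⊤ e^{(T-t)A^⊤} z`. -/
def adjOut (A : Matrix (Fin n) (Fin n) ℝ) (B : Matrix (Fin n) (Fin m) ℝ)
    (T : ℝ) (z : EuclideanSpace ℝ (Fin n)) (t : ℝ) : EuclideanSpace ℝ (Fin m) :=
  mulVecE Bᵀ (mulVecE (NormedSpace.exp ((T - t) • Aᵀ)) z)

/-- The reachable set `R_T`. -/
def reachSet (A : Matrix (Fin n) (Fin n) ℝ) (B : Matrix (Fin n) (Fin m) ℝ)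
    (T : ℝ) : Set (EuclideanSpace ℝ (Fin n)) :=
  {x | ∃ v : ℝ → EuclideanSpace ℝ (Fin m),
    Measurable v ∧ supNorm T v < ⊤ ∧ reachOutput A B T v = x}

/-- The reachable norm `‖x‖_{R_T}`, valued in `[0,∞]`. -/
def reachNorm (A : Matrix (Fin n) (Fin n) ℝ) (B : Matrix (Fin n) (Fin m) ℝ)
    (T : ℝ) (x : EuclideanSpace ℝ (Fin n)) : ℝ≥0∞ :=
  ⨅ (v : ℝ → EuclideanSpace ℝ (Fin m))
    (_ : Measurable v ∧ supNorm T v < ⊤ ∧ reachOutput A B T v = x), supNorm T v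

/-! ### Auxiliary material -/

attribute [local instance] Matrix.linftyOpNormedAddCommGroup Matrix.linftyOpNormedRing
  Matrix.linftyOpNormedAlgebra

section MulVecBasics

lemma mulVecE_neg {a b : ℕ} (M : Matrix (Fin a) (Fin b) ℝ) (x : EuclideanSpace ℝ (Fin b)) :
    mulVecE (-M) x = -mulVecE M x := by simp [mulVecE, Matrix.neg_mulVec]

lemma mulVecE_mulVecE {a b c : ℕ} (M : Matrix (Fin a) (Fin b) ℝ)
    (N : Matrix (Fin b) (Fin c) ℝ) (x : EuclideanSpace ℝ (Fin c)) :
    mulVecE M (mulVecE N x) = mulVecE (M * N) x := by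
  simp [mulVecE, Matrix.mulVec_mulVec]
  exact Matrix.mulVec_mulVec _ M N

/-- CLM in the matrix argument. -/
def matApplyCLM {a b : ℕ} (z : EuclideanSpace ℝ (Fin b)) :
    Matrix (Fin a) (Fin b) ℝ →L[ℝ] EuclideanSpace ℝ (Fin a) :=
  LinearMap.toContinuousLinearMap
    { toFun := fun M => mulVecE M z
      map_add' := fun M N => by simp [mulVecE, Matrix.add_mulVec]
      map_smul' := fun c M => by simp [mulVecE, Matrix.smul_mulVec] }

@[simp] lemma matApplyCLM_apply {a b : ℕ} (z : EuclideanSpace ℝ (Fin b))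
    (M : Matrix (Fin a) (Fin b) ℝ) : matApplyCLM z M = mulVecE M z := rfl

/-- CLM in the vector argument. -/
def mulVecCLM {a b : ℕ} (M : Matrix (Fin a) (Fin b) ℝ) :
    EuclideanSpace ℝ (Fin b) →L[ℝ] EuclideanSpace ℝ (Fin a) :=
  LinearMap.toContinuousLinearMap
    { toFun := fun z => mulVecE M z
      map_add' := fun x y => by simp [mulVecE, Matrix.mulVec_add]
      map_smul' := fun c x => by simp [mulVecE, Matrix.mulVec_smul] }

@[simp] lemma mulVecCLM_apply {a b : ℕ} (M : Matrix (Fin a) (Fin b) ℝ)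
    (x : EuclideanSpace ℝ (Fin b)) : mulVecCLM M x = mulVecE M x := rfl

lemma mulVecE_add_right {a b : ℕ} (M : Matrix (Fin a) (Fin b) ℝ)
    (x y : EuclideanSpace ℝ (Fin b)) :
    mulVecE M (x + y) = mulVecE M x + mulVecE M y := (mulVecCLM M).map_add x y

lemma mulVecE_smul_right {a b : ℕ} (M : Matrix (Fin a) (Fin b) ℝ) (c : ℝ)
    (x : EuclideanSpace ℝ (Fin b)) :
    mulVecE M (c • x) = c • mulVecE M x := (mulVecCLM M).map_smul c x

lemma mulVecE_smul_left {a b : ℕ} (c : ℝ) (M : Matrix (Fin a) (Fin b) ℝ)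
    (x : EuclideanSpace ℝ (Fin b)) :
    mulVecE (c • M) x = c • mulVecE M x := (matApplyCLM x).map_smul c M

lemma mulVecE_neg_right {a b : ℕ} (M : Matrix (Fin a) (Fin b) ℝ)
    (x : EuclideanSpace ℝ (Fin b)) :
    mulVecE M (-x) = -mulVecE M x := (mulVecCLM M).map_neg x

@[simp] lemma mulVecE_zero {a b : ℕ} (M : Matrix (Fin a) (Fin b) ℝ) :
    mulVecE M (0 : EuclideanSpace ℝ (Fin b)) = 0 := (mulVecCLM M).map_zero

@[simp] lemma mulVecE_one {a : ℕ} (x : EuclideanSpace ℝ (Fin a)) :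
    mulVecE (1 : Matrix (Fin a) (Fin a) ℝ) x = x := by
  simp [mulVecE]

lemma inner_mulVecE {a b : ℕ} (M : Matrix (Fin a) (Fin b) ℝ)
    (x : EuclideanSpace ℝ (Fin b)) (y : EuclideanSpace ℝ (Fin a)) :
    ⟪mulVecE M x, y⟫ = ⟪x, mulVecE Mᵀ y⟫ := by
  simp only [mulVecE, PiLp.inner_apply, RCLike.inner_apply, conj_trivial]
  show y.ofLp ⬝ᵥ (M *ᵥ x.ofLp) = (Mᵀ *ᵥ y.ofLp) ⬝ᵥ x.ofLp
  rw [Matrix.dotProduct_mulVec, Matrix.mulVec_transpose]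

lemma exp_smul_transpose {a : ℕ} (c : ℝ) (M : Matrix (Fin a) (Fin a) ℝ) :
    (NormedSpace.exp (c • M))ᵀ = NormedSpace.exp (c • Mᵀ) := by
  rw [← Matrix.transpose_smul, ← Matrix.exp_transpose]

end MulVecBasics

section ExpCalculus

lemma hasDerivAt_mulVecE_exp {a : ℕ} (M : Matrix (Fin a) (Fin a) ℝ)
    (z : EuclideanSpace ℝ (Fin a)) (T t : ℝ) :
    HasDerivAt (fun t : ℝ => mulVecE (NormedSpace.exp ((T - t) • M)) z)
      (-(mulVecE (M * NormedSpace.exp ((T - t) • M)) z)) t := by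
  have h1 : HasDerivAt (fun u : ℝ => NormedSpace.exp (u • M))
      (M * NormedSpace.exp ((T - t) • M)) (T - t) := hasDerivAt_exp_smul_const' M (T - t)
  have h2 : HasDerivAt (fun t : ℝ => T - t) (-1) t := by
    simpa using (hasDerivAt_id t).const_sub T
  have h3 := h1.scomp t h2
  have h4 := (matApplyCLM (a := a) z).hasFDerivAt.comp_hasDerivAt t h3
  refine HasDerivAt.congr_deriv h4 ?_
  change mulVecE (-1 • (M * NormedSpace.exp ((T - t) • M))) z = -mulVecE _ z
  rw [mulVecE_smul_left, neg_one_smul]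

lemma continuous_mulVecE_exp {a : ℕ} (M : Matrix (Fin a) (Fin a) ℝ)
    (z : EuclideanSpace ℝ (Fin a)) (T : ℝ) :
    Continuous fun s : ℝ => mulVecE (NormedSpace.exp ((T - s) • M)) z := by
  have h1 : Continuous fun s : ℝ => NormedSpace.exp ((T - s) • M) :=
    NormedSpace.exp_continuous.comp (((continuous_const).sub continuous_id).smul continuous_const)
  exact (matApplyCLM z).continuous.comp h1

lemma summable_mulVecE_pow {a : ℕ} (M : Matrix (Fin a) (Fin a) ℝ)
    (z : EuclideanSpace ℝ (Fin a)) :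
    Summable fun k : ℕ => ((k.factorial : ℝ)⁻¹) • mulVecE (M ^ k) z := by
  have hs : Summable fun k : ℕ => ((k.factorial : ℝ)⁻¹) • M ^ k :=
    NormedSpace.expSeries_summable' (𝕂 := ℝ) M
  have := hs.map (matApplyCLM (a := a) z).toLinearMap (matApplyCLM z).continuous
  simpa [Function.comp_def] using this

lemma mulVecE_exp_eq_tsum {a : ℕ} (M : Matrix (Fin a) (Fin a) ℝ)
    (z : EuclideanSpace ℝ (Fin a)) :
    mulVecE (NormedSpace.exp M) z = ∑' k : ℕ, ((k.factorial : ℝ)⁻¹) • mulVecE (M ^ k) z := by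
  have hs : Summable fun k : ℕ => ((k.factorial : ℝ)⁻¹) • M ^ k :=
    NormedSpace.expSeries_summable' (𝕂 := ℝ) M
  have h0 : NormedSpace.exp M = ∑' k : ℕ, ((k.factorial : ℝ)⁻¹) • M ^ k := by
    rw [NormedSpace.exp_eq_tsum (𝕂 := ℝ)]
  calc mulVecE (NormedSpace.exp M) z
      = matApplyCLM z (∑' k : ℕ, ((k.factorial : ℝ)⁻¹) • M ^ k) := by rw [← h0]; rfl
    _ = ∑' k : ℕ, ((k.factorial : ℝ)⁻¹) • mulVecE (M ^ k) z := by
        rw [(matApplyCLM z).map_tsum hs]; simp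

lemma tsum_mem_submodule {F : Type*} [NormedAddCommGroup F] [NormedSpace ℝ F]
    [FiniteDimensional ℝ F] (S : Submodule ℝ F) {f : ℕ → F} (hf : Summable f)
    (h : ∀ k, f k ∈ S) : ∑' k, f k ∈ S := by
  have hcl : IsClosed (S : Set F) := Submodule.closed_of_finiteDimensional S
  exact hcl.mem_of_tendsto hf.hasSum.tendsto_sum_nat
    (Filter.Eventually.of_forall fun s => Submodule.sum_mem S fun k _ => h k)

/-- Uniform bound for the exponential flow over a compact time interval. -/
lemma exists_exp_bound {a : ℕ} (M : Matrix (Fin a) (Fin a) ℝ) (T : ℝ) :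
    ∃ C : ℝ, 0 ≤ C ∧ ∀ s ∈ Icc (0 : ℝ) T, ∀ u : EuclideanSpace ℝ (Fin a),
      ‖mulVecE (NormedSpace.exp ((T - s) • M)) u‖ ≤ C * ‖u‖ := by
  have hcont : Continuous fun p : ℝ × EuclideanSpace ℝ (Fin a) =>
      mulVecE (NormedSpace.exp ((T - p.1) • M)) p.2 := by
    have h1 : Continuous fun p : ℝ × EuclideanSpace ℝ (Fin a) =>
        NormedSpace.exp ((T - p.1) • M) :=
      NormedSpace.exp_continuous.comp
        (((continuous_const).sub continuous_fst).smul continuous_const)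
    have h2 : Continuous fun p : ℝ × EuclideanSpace ℝ (Fin a) =>
        (NormedSpace.exp ((T - p.1) • M)).mulVec
          ((EuclideanSpace.equiv (Fin a) ℝ) p.2) := by
      exact h1.matrix_mulVec ((EuclideanSpace.equiv (Fin a) ℝ).continuous.comp continuous_snd)
    exact ((EuclideanSpace.equiv (Fin a) ℝ).symm.continuous).comp h2
  have hK : IsCompact ((Icc (0 : ℝ) T) ×ˢ (Metric.closedBall (0 : EuclideanSpace ℝ (Fin a)) 1)) :=
    isCompact_Icc.prod (isCompact_closedBall _ _)
  obtain ⟨C, hC⟩ := hK.exists_bound_of_continuousOn hcont.continuousOn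
  refine ⟨max C 0, le_max_right _ _, fun s hs u => ?_⟩
  rcases eq_or_ne u 0 with rfl | hu
  · simp
  · have hnu : 0 < ‖u‖ := norm_pos_iff.2 hu
    have hmem : (s, (‖u‖⁻¹ : ℝ) • u) ∈
        (Icc (0 : ℝ) T) ×ˢ (Metric.closedBall (0 : EuclideanSpace ℝ (Fin a)) 1) := by
      refine ⟨hs, ?_⟩
      simp [norm_smul, abs_of_nonneg (inv_nonneg.2 hnu.le), inv_mul_le_one₀,
        Metric.mem_closedBall, dist_zero_right]
      rw [inv_mul_le_one₀ hnu]
    have hb := hC _ hmem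
    have heq : mulVecE (NormedSpace.exp ((T - s) • M)) ((‖u‖⁻¹ : ℝ) • u)
        = (‖u‖⁻¹ : ℝ) • mulVecE (NormedSpace.exp ((T - s) • M)) u :=
      mulVecE_smul_right _ _ _
    rw [heq, norm_smul, Real.norm_eq_abs, abs_of_nonneg (inv_nonneg.2 hnu.le)] at hb
    have := (inv_mul_le_iff₀ hnu).1 hb
    calc ‖mulVecE (NormedSpace.exp ((T - s) • M)) u‖ ≤ ‖u‖ * C := by
          rw [mul_comm] at this ⊢; exact this
      _ ≤ ‖u‖ * max C 0 := by
          exact mul_le_mul_of_nonneg_left (le_max_left _ _) (norm_nonneg _)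
      _ = max C 0 * ‖u‖ := mul_comm _ _

end ExpCalculus

section RinfSection

variable (A : Matrix (Fin n) (Fin n) ℝ) (B : Matrix (Fin n) (Fin m) ℝ)

/-- The span of all columns of all `A^k B`, `k : ℕ`. -/
def Rinf : Submodule ℝ (EuclideanSpace ℝ (Fin n)) :=
  Submodule.span ℝ
    {x | ∃ (k : ℕ) (j : Fin m), x = mulVecE (A ^ k * B) (EuclideanSpace.single j 1)}

lemma reach_le_Rinf : reach A B ≤ Rinf A B := by
  apply Submodule.span_mono
  rintro x ⟨k, j, _, hx⟩
  exact ⟨k, j, hx⟩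

lemma mem_orthogonal_span_iff {F : Type*} [NormedAddCommGroup F] [InnerProductSpace ℝ F]
    (s : Set F) (z : F) : z ∈ (Submodule.span ℝ s)ᗮ ↔ ∀ u ∈ s, ⟪u, z⟫ = 0 := by
  constructor
  · intro hz u hu
    exact hz u (Submodule.subset_span hu)
  · intro h
    rw [Submodule.mem_orthogonal]
    intro u hu
    refine Submodule.span_induction (p := fun u _ => ⟪u, z⟫ = 0)
      (fun x hx => h x hx) (by simp) ?_ ?_ hu
    · intro x y _ _ hx hy; rw [inner_add_left, hx, hy, add_zero]
    · intro c x _ hx; rw [real_inner_smul_left, hx, mul_zero]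

lemma mem_Rinf_perp_iff (z : EuclideanSpace ℝ (Fin n)) :
    z ∈ (Rinf A B)ᗮ ↔ ∀ k : ℕ, mulVecE (Bᵀ * (Aᵀ) ^ k) z = 0 := by
  rw [Rinf, mem_orthogonal_span_iff]
  have key : ∀ (k : ℕ) (j : Fin m),
      ⟪mulVecE (A ^ k * B) (EuclideanSpace.single j 1), z⟫
        = mulVecE (Bᵀ * (Aᵀ) ^ k) z j := by
    intro k j
    rw [inner_mulVecE, Matrix.transpose_mul, Matrix.transpose_pow]
    simp [EuclideanSpace.inner_single_left]
  constructor
  · intro h k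
    ext j
    rw [← key k j]
    exact h _ ⟨k, j, rfl⟩
  · rintro h u ⟨k, j, rfl⟩
    rw [key k j, h k]
    rfl

/-- If `z ⊥ Rinf`, then the adjoint output vanishes identically. -/
lemma adjOut_eq_zero_of_perp {z : EuclideanSpace ℝ (Fin n)} (hz : z ∈ (Rinf A B)ᗮ)
    (T t : ℝ) : adjOut A B T z t = 0 := by
  rw [mem_Rinf_perp_iff] at hz
  rw [adjOut, mulVecE_exp_eq_tsum, ← mulVecCLM_apply Bᵀ,
    (mulVecCLM Bᵀ).map_tsum (summable_mulVecE_pow _ _)]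
  have hterm : ∀ k : ℕ,
      (mulVecCLM Bᵀ) (((k.factorial : ℝ)⁻¹) • mulVecE (((T - t) • Aᵀ) ^ k) z) = 0 := by
    intro k
    rw [_root_.map_smul, mulVecCLM_apply, smul_pow, mulVecE_smul_left, mulVecE_smul_right,
      mulVecE_mulVecE, hz k]
    simp
  simp [hterm]

lemma mulVecE_matrix_mem_Rinf {y : EuclideanSpace ℝ (Fin n)} (hy : y ∈ Rinf A B) :
    ∀ k : ℕ, mulVecE (A ^ k) y ∈ Rinf A B := by
  have hA : ∀ x ∈ Rinf A B, mulVecE A x ∈ Rinf A B := by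
    intro x hx
    refine Submodule.span_induction (p := fun x _ => mulVecE A x ∈ Rinf A B)
      ?_ (by simp [Rinf]) ?_ ?_ hx
    · rintro u ⟨k, j, rfl⟩
      rw [mulVecE_mulVecE]
      have : A * (A ^ k * B) = A ^ (k + 1) * B := by
        rw [← Matrix.mul_assoc, ← pow_succ']
      rw [this]
      exact Submodule.subset_span ⟨k + 1, j, rfl⟩
    · intro u v _ _ hu hv
      rw [mulVecE_add_right]; exact Submodule.add_mem _ hu hv
    · intro c u _ hu
      rw [mulVecE_smul_right]; exact Submodule.smul_mem _ _ hu
  intro k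
  induction k with
  | zero => simpa using hy
  | succ k ih =>
      have : mulVecE (A ^ (k + 1)) y = mulVecE A (mulVecE (A ^ k) y) := by
        rw [mulVecE_mulVecE, ← pow_succ']
        
      rw [this]
      exact hA _ ih

lemma mulVecE_exp_mem_Rinf {y : EuclideanSpace ℝ (Fin n)} (hy : y ∈ Rinf A B) (t : ℝ) :
    mulVecE (NormedSpace.exp (t • A)) y ∈ Rinf A B := by
  rw [mulVecE_exp_eq_tsum]
  refine tsum_mem_submodule _ (summable_mulVecE_pow _ _) fun k => ?_
  have : mulVecE ((t • A) ^ k) y = t ^ k • mulVecE (A ^ k) y := by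
    rw [smul_pow, mulVecE_smul_left]
  rw [this]
  exact Submodule.smul_mem _ _ (Submodule.smul_mem _ _ (mulVecE_matrix_mem_Rinf A B hy k))

/-- Continuity of the adjoint output in time. -/
lemma continuous_adjOut (T : ℝ) (z : EuclideanSpace ℝ (Fin n)) :
    Continuous fun t : ℝ => adjOut A B T z t :=
  (mulVecCLM Bᵀ).continuous.comp (continuous_mulVecE_exp Aᵀ z T)

/-- Analyticity direction: if the adjoint output vanishes on `(0,T)`, then `z ⊥ Rinf`. -/
lemma perp_of_adjOut_eq_zero {T : ℝ} (hT : 0 < T) {z : EuclideanSpace ℝ (Fin n)}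
    (h : ∀ t ∈ Ioo (0 : ℝ) T, adjOut A B T z t = 0) : z ∈ (Rinf A B)ᗮ := by
  have key : ∀ k : ℕ, ∀ t ∈ Ioo (0 : ℝ) T,
      mulVecE (Bᵀ * (Aᵀ) ^ k) (mulVecE (NormedSpace.exp ((T - t) • Aᵀ)) z) = 0 := by
    intro k
    induction k with
    | zero =>
        intro t ht
        have := h t ht
        rw [adjOut] at this
        simpa [pow_zero, mul_one] using this
    | succ k ih =>
        intro t ht
        set f : ℝ → EuclideanSpace ℝ (Fin m) :=
          fun t => mulVecE (Bᵀ * (Aᵀ) ^ k) (mulVecE (NormedSpace.exp ((T - t) • Aᵀ)) z) with hf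
        have hder : HasDerivAt f
            (-(mulVecE (Bᵀ * (Aᵀ) ^ k)
              (mulVecE (Aᵀ * NormedSpace.exp ((T - t) • Aᵀ)) z))) t := by
          have h1 := hasDerivAt_mulVecE_exp Aᵀ z T t
          have h2 := (mulVecCLM (a := m) (Bᵀ * (Aᵀ) ^ k)).hasFDerivAt.comp_hasDerivAt t h1
          simpa [Function.comp_def, mulVecE_neg_right] using h2
        have hzero : HasDerivAt f 0 t := by
          have hmem : Ioo (0 : ℝ) T ∈ nhds t := isOpen_Ioo.mem_nhds ht
          have heq : f =ᶠ[nhds t] fun _ => 0 :=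
            Filter.eventuallyEq_of_mem hmem (fun s hs => ih s hs)
          exact (hasDerivAt_const t 0).congr_of_eventuallyEq heq
        have hd := hder.unique hzero
        have h3 : mulVecE (Bᵀ * (Aᵀ) ^ k)
            (mulVecE (Aᵀ * NormedSpace.exp ((T - t) • Aᵀ)) z) = 0 := by
          have := neg_eq_zero.1 hd
          exact this
        calc mulVecE (Bᵀ * (Aᵀ) ^ (k + 1)) (mulVecE (NormedSpace.exp ((T - t) • Aᵀ)) z)
            = mulVecE (Bᵀ * (Aᵀ) ^ k) (mulVecE (Aᵀ * NormedSpace.exp ((T - t) • Aᵀ)) z) := by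
              rw [mulVecE_mulVecE, mulVecE_mulVecE]
              congr 1
              simp only [pow_succ, Matrix.mul_assoc]
          _ = 0 := h3
  rw [mem_Rinf_perp_iff]
  intro k
  have hcont : Continuous fun t : ℝ =>
      mulVecE (Bᵀ * (Aᵀ) ^ k) (mulVecE (NormedSpace.exp ((T - t) • Aᵀ)) z) :=
    (mulVecCLM _).continuous.comp (continuous_mulVecE_exp Aᵀ z T)
  have heqon0 : EqOn (fun t : ℝ =>
      mulVecE (Bᵀ * (Aᵀ) ^ k) (mulVecE (NormedSpace.exp ((T - t) • Aᵀ)) z))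
      (fun _ => 0) (Ioo (0 : ℝ) T) := fun t ht => key k t ht
  have heqon := heqon0.closure hcont continuous_const
  have hTmem : T ∈ closure (Ioo (0 : ℝ) T) := by
    rw [closure_Ioo hT.ne]
    exact ⟨hT.le, le_refl T⟩
  have := heqon hTmem
  simpa using this

end RinfSection

section IntegralLayer

variable (A : Matrix (Fin n) (Fin n) ℝ) (B : Matrix (Fin n) (Fin m) ℝ) (T : ℝ)

lemma measurable_integrand {v : ℝ → EuclideanSpace ℝ (Fin m)} (hv : Measurable v) :
    Measurable fun s : ℝ => mulVecE (NormedSpace.exp ((T - s) • A)) (mulVecE B (v s)) := by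
  have hw : Measurable fun s => (EuclideanSpace.equiv (Fin m) ℝ) (v s) :=
    (EuclideanSpace.equiv (Fin m) ℝ).continuous.measurable.comp hv
  have hFc : Continuous fun s : ℝ => NormedSpace.exp ((T - s) • A) :=
    NormedSpace.exp_continuous.comp
      (((continuous_const).sub continuous_id).smul continuous_const)
  have hpi : Measurable fun s : ℝ =>
      (NormedSpace.exp ((T - s) • A)).mulVec (B.mulVec ((EuclideanSpace.equiv (Fin m) ℝ) (v s))) := by
    rw [measurable_pi_iff]
    intro i
    simp only [Matrix.mulVec, dotProduct]
    apply Finset.measurable_sum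
    intro j _
    have h1 : Measurable fun s : ℝ => (NormedSpace.exp ((T - s) • A)) i j :=
      ((continuous_apply j).comp ((continuous_apply i).comp hFc)).measurable
    have h2 : Measurable fun s : ℝ => (B.mulVec ((EuclideanSpace.equiv (Fin m) ℝ) (v s))) j := by
      simp only [Matrix.mulVec, dotProduct]
      apply Finset.measurable_sum
      intro l _
      exact (measurable_const.mul ((measurable_pi_apply l).comp hw))
    exact h1.mul h2
  have : (fun s : ℝ => mulVecE (NormedSpace.exp ((T - s) • A)) (mulVecE B (v s)))
      = fun s => (EuclideanSpace.equiv (Fin n) ℝ).symm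
          ((NormedSpace.exp ((T - s) • A)).mulVec
            (B.mulVec ((EuclideanSpace.equiv (Fin m) ℝ) (v s)))) := by
    funext s
    simp [mulVecE]
    exact Matrix.mulVec_mulVec _ _ B
  rw [this]
  exact (EuclideanSpace.equiv (Fin n) ℝ).symm.continuous.measurable.comp hpi

lemma integrableOn_integrand {v : ℝ → EuclideanSpace ℝ (Fin m)} (hv : Measurable v) {c : ℝ}
    (hb : ∀ᵐ t ∂(volume.restrict (Ioo (0 : ℝ) T)), ‖v t‖ ≤ c) :
    IntegrableOn (fun s => mulVecE (NormedSpace.exp ((T - s) • A)) (mulVecE B (v s)))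
      (Ioc (0 : ℝ) T) := by
  obtain ⟨C, hC0, hC⟩ := exists_exp_bound A T
  set CB : ℝ := ‖mulVecCLM (a := n) B‖ with hCB
  have hb' : ∀ᵐ t ∂(volume.restrict (Ioc (0 : ℝ) T)), ‖v t‖ ≤ c := by
    rwa [← Measure.restrict_congr_set Ioo_ae_eq_Ioc]
  have hmem : ∀ᵐ t ∂(volume.restrict (Ioc (0 : ℝ) T)), t ∈ Ioc (0 : ℝ) T :=
    ae_restrict_mem measurableSet_Ioc
  refine Integrable.mono' (g := fun _ => C * (CB * c)) ?_ ?_ ?_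
  · exact integrableOn_const (C := C * (CB * c)) measure_Ioc_lt_top.ne
  · exact (measurable_integrand A B T hv).aestronglyMeasurable
  · filter_upwards [hb', hmem] with t htb htm
    have h1 : ‖mulVecE (NormedSpace.exp ((T - t) • A)) (mulVecE B (v t))‖
        ≤ C * ‖mulVecE B (v t)‖ := hC t (Ioc_subset_Icc_self htm) _
    have h2 : ‖mulVecE B (v t)‖ ≤ CB * ‖v t‖ := (mulVecCLM B).le_opNorm (v t)
    have hCB0 : 0 ≤ CB := norm_nonneg _
    have hvt0 : 0 ≤ ‖v t‖ := norm_nonneg _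
    calc ‖mulVecE (NormedSpace.exp ((T - t) • A)) (mulVecE B (v t))‖
        ≤ C * ‖mulVecE B (v t)‖ := h1
      _ ≤ C * (CB * c) := by
          apply mul_le_mul_of_nonneg_left _ hC0
          calc ‖mulVecE B (v t)‖ ≤ CB * ‖v t‖ := h2
            _ ≤ CB * c := mul_le_mul_of_nonneg_left htb hCB0

lemma inner_reachOutput {v : ℝ → EuclideanSpace ℝ (Fin m)} (hv : Measurable v) {c : ℝ}
    (hb : ∀ᵐ t ∂(volume.restrict (Ioo (0 : ℝ) T)), ‖v t‖ ≤ c) (z : EuclideanSpace ℝ (Fin n)) :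
    ⟪reachOutput A B T v, z⟫ = ∫ s in Ioc (0 : ℝ) T, ⟪v s, adjOut A B T z s⟫ := by
  have hcomm : ⟪(∫ s in Ioc (0 : ℝ) T, mulVecE (NormedSpace.exp ((T - s) • A))
        (mulVecE B (v s))), z⟫
      = ⟪z, ∫ s in Ioc (0 : ℝ) T, mulVecE (NormedSpace.exp ((T - s) • A))
        (mulVecE B (v s))⟫ := real_inner_comm _ _
  rw [reachOutput, hcomm, ← integral_inner (integrableOn_integrand A B T hv hb) z]
  apply setIntegral_congr_fun measurableSet_Ioc
  intro s _
  show ⟪z, mulVecE (NormedSpace.exp ((T - s) • A)) (mulVecE B (v s))⟫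
      = ⟪v s, adjOut A B T z s⟫
  rw [real_inner_comm _ z, inner_mulVecE, exp_smul_transpose, inner_mulVecE]
  rfl

lemma reachOutput_mem_Rinf {v : ℝ → EuclideanSpace ℝ (Fin m)} (hv : Measurable v) {c : ℝ}
    (hb : ∀ᵐ t ∂(volume.restrict (Ioo (0 : ℝ) T)), ‖v t‖ ≤ c) :
    reachOutput A B T v ∈ Rinf A B := by
  rw [← Submodule.orthogonal_orthogonal (Rinf A B)]
  rw [Submodule.mem_orthogonal]
  intro u hu
  rw [real_inner_comm, inner_reachOutput A B T hv hb u]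
  have : ∀ s, ⟪v s, adjOut A B T u s⟫ = 0 := fun s => by
    rw [adjOut_eq_zero_of_perp A B hu, inner_zero_right]
  simp [this]

lemma reachOutput_add {v w : ℝ → EuclideanSpace ℝ (Fin m)} (hv : Measurable v)
    (hw : Measurable w) {c d : ℝ}
    (hbv : ∀ᵐ t ∂(volume.restrict (Ioo (0 : ℝ) T)), ‖v t‖ ≤ c)
    (hbw : ∀ᵐ t ∂(volume.restrict (Ioo (0 : ℝ) T)), ‖w t‖ ≤ d) :
    reachOutput A B T (fun s => v s + w s) = reachOutput A B T v + reachOutput A B T w := by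
  have heq : ∀ s, mulVecE (NormedSpace.exp ((T - s) • A)) (mulVecE B (v s + w s))
      = mulVecE (NormedSpace.exp ((T - s) • A)) (mulVecE B (v s))
        + mulVecE (NormedSpace.exp ((T - s) • A)) (mulVecE B (w s)) := by
    intro s
    rw [mulVecE_add_right, mulVecE_add_right]
  rw [reachOutput, reachOutput, reachOutput]
  simp only [heq]
  exact integral_add (integrableOn_integrand A B T hv hbv) (integrableOn_integrand A B T hw hbw)

lemma reachOutput_smul (c : ℝ) (v : ℝ → EuclideanSpace ℝ (Fin m)) :
    reachOutput A B T (fun s => c • v s) = c • reachOutput A B T v := by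
  have heq : ∀ s, mulVecE (NormedSpace.exp ((T - s) • A)) (mulVecE B (c • v s))
      = c • mulVecE (NormedSpace.exp ((T - s) • A)) (mulVecE B (v s)) := by
    intro s
    rw [mulVecE_smul_right, mulVecE_smul_right]
  rw [reachOutput, reachOutput]
  simp only [heq]
  exact integral_smul c _

@[simp] lemma reachOutput_zero : reachOutput A B T (fun _ => 0) = 0 := by
  simp [reachOutput]

lemma zero_on_Ioo_of_integral_zero {g : ℝ → ℝ} (hg : Continuous g) (h0 : ∀ t, 0 ≤ g t)
    (hint : ∫ t in Ioc (0 : ℝ) T, g t = 0) : ∀ t ∈ Ioo (0 : ℝ) T, g t = 0 := by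
  have hig : IntegrableOn g (Ioc (0 : ℝ) T) := hg.integrableOn_Ioc
  have hae : g =ᵐ[volume.restrict (Ioc (0 : ℝ) T)] 0 :=
    (integral_eq_zero_iff_of_nonneg (fun t => h0 t) hig).1 hint
  by_contra hc
  push_neg at hc
  obtain ⟨t, ht, hgt⟩ := hc
  have hopen : IsOpen (Ioo (0 : ℝ) T ∩ {s | g s ≠ 0}) :=
    isOpen_Ioo.inter (isOpen_compl_singleton.preimage hg)
  have hne : (Ioo (0 : ℝ) T ∩ {s | g s ≠ 0}).Nonempty := ⟨t, ht, hgt⟩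
  have hpos : 0 < volume (Ioo (0 : ℝ) T ∩ {s | g s ≠ 0}) := hopen.measure_pos volume hne
  have hsub : Ioo (0 : ℝ) T ∩ {s | g s ≠ 0} ⊆ {s | g s ≠ 0} ∩ Ioc (0 : ℝ) T := by
    rintro s ⟨hs1, hs2⟩
    exact ⟨hs2, Ioo_subset_Ioc_self hs1⟩
  have hmeas : MeasurableSet {s : ℝ | g s ≠ 0} :=
    (isOpen_compl_singleton.preimage hg).measurableSet
  have hnull : volume ({s | g s ≠ 0} ∩ Ioc (0 : ℝ) T) = 0 := by
    have h2 := hae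
    rw [Filter.EventuallyEq, ae_iff] at h2
    simp only [Pi.zero_apply] at h2
    rw [Measure.restrict_apply hmeas] at h2
    exact h2
  have : volume (Ioo (0 : ℝ) T ∩ {s | g s ≠ 0}) = 0 :=
    le_antisymm ((measure_mono hsub).trans hnull.le) zero_le
  exact hpos.ne' this

lemma supNorm_lt_top_of_bound {v : ℝ → EuclideanSpace ℝ (Fin m)} {c : ℝ}
    (hb : ∀ᵐ t ∂(volume.restrict (Ioo (0 : ℝ) T)), ‖v t‖ ≤ c) : supNorm T v < ⊤ := by
  rw [supNorm, eLpNorm_exponent_top]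
  exact eLpNormEssSup_lt_top_of_ae_bound hb

lemma supNorm_le_ofReal {v : ℝ → EuclideanSpace ℝ (Fin m)} {c : ℝ}
    (hb : ∀ᵐ t ∂(volume.restrict (Ioo (0 : ℝ) T)), ‖v t‖ ≤ c) :
    supNorm T v ≤ ENNReal.ofReal c := by
  rw [supNorm, eLpNorm_exponent_top]
  exact eLpNormEssSup_le_of_ae_bound hb

lemma ae_bound_of_supNorm {v : ℝ → EuclideanSpace ℝ (Fin m)} (h : supNorm T v ≠ ⊤) :
    ∀ᵐ t ∂(volume.restrict (Ioo (0 : ℝ) T)), ‖v t‖ ≤ (supNorm T v).toReal := by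
  have hle := enorm_ae_le_eLpNormEssSup v (volume.restrict (Ioo (0 : ℝ) T))
  rw [supNorm, eLpNorm_exponent_top] at h ⊢
  filter_upwards [hle] with t ht
  have := ENNReal.toReal_mono h ht
  simpa using this

end IntegralLayer

section WSection

variable (A : Matrix (Fin n) (Fin n) ℝ) (B : Matrix (Fin n) (Fin m) ℝ) (T : ℝ)

lemma adjOut_add (z w : EuclideanSpace ℝ (Fin n)) (t : ℝ) :
    adjOut A B T (z + w) t = adjOut A B T z t + adjOut A B T w t := by
  simp [adjOut, mulVecE_add_right]

lemma adjOut_smul (c : ℝ) (z : EuclideanSpace ℝ (Fin n)) (t : ℝ) :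
    adjOut A B T (c • z) t = c • adjOut A B T z t := by
  simp [adjOut, mulVecE_smul_right]

lemma adjOut_neg (z : EuclideanSpace ℝ (Fin n)) (t : ℝ) :
    adjOut A B T (-z) t = -adjOut A B T z t := by
  simp [adjOut, mulVecE_neg_right]

lemma measurable_adjOut (z : EuclideanSpace ℝ (Fin n)) : Measurable (adjOut A B T z) :=
  (continuous_adjOut A B T z).measurable

lemma exists_adjOut_bound : ∃ C : ℝ, 0 ≤ C ∧ ∀ (z : EuclideanSpace ℝ (Fin n)),
    ∀ t ∈ Icc (0 : ℝ) T, ‖adjOut A B T z t‖ ≤ C * ‖z‖ := by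
  obtain ⟨C, hC0, hC⟩ := exists_exp_bound Aᵀ T
  refine ⟨‖mulVecCLM (a := m) Bᵀ‖ * C, by positivity, fun z t ht => ?_⟩
  rw [adjOut]
  calc ‖mulVecE Bᵀ (mulVecE (NormedSpace.exp ((T - t) • Aᵀ)) z)‖
      ≤ ‖mulVecCLM (a := m) Bᵀ‖ * ‖mulVecE (NormedSpace.exp ((T - t) • Aᵀ)) z‖ :=
        (mulVecCLM Bᵀ).le_opNorm _
    _ ≤ ‖mulVecCLM (a := m) Bᵀ‖ * (C * ‖z‖) :=
        mul_le_mul_of_nonneg_left (hC t ht z) (norm_nonneg _)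
    _ = ‖mulVecCLM (a := m) Bᵀ‖ * C * ‖z‖ := by ring

lemma adjOut_ae_bound (z : EuclideanSpace ℝ (Fin n)) {C : ℝ}
    (hC : ∀ t ∈ Icc (0 : ℝ) T, ‖adjOut A B T z t‖ ≤ C) :
    ∀ᵐ t ∂(volume.restrict (Ioo (0 : ℝ) T)), ‖adjOut A B T z t‖ ≤ C := by
  filter_upwards [ae_restrict_mem measurableSet_Ioo] with t ht
  exact hC t (Ioo_subset_Icc_self ht)

/-- The controllability Gramian as a map. -/
def Wmap (η : EuclideanSpace ℝ (Fin n)) : EuclideanSpace ℝ (Fin n) :=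
  reachOutput A B T (adjOut A B T η)

lemma inner_Wmap (η ζ : EuclideanSpace ℝ (Fin n)) :
    ⟪Wmap A B T η, ζ⟫ = ∫ t in Ioc (0 : ℝ) T, ⟪adjOut A B T η t, adjOut A B T ζ t⟫ := by
  obtain ⟨C, hC0, hC⟩ := exists_adjOut_bound A B T
  exact inner_reachOutput A B T (measurable_adjOut A B T η)
    (adjOut_ae_bound A B T η (fun t ht => hC η t ht)) ζ

lemma Wmap_mem_Rinf (η : EuclideanSpace ℝ (Fin n)) : Wmap A B T η ∈ Rinf A B := by
  obtain ⟨C, hC0, hC⟩ := exists_adjOut_bound A B T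
  exact reachOutput_mem_Rinf A B T (measurable_adjOut A B T η)
    (adjOut_ae_bound A B T η (fun t ht => hC η t ht))

lemma Wmap_add (η ζ : EuclideanSpace ℝ (Fin n)) :
    Wmap A B T (η + ζ) = Wmap A B T η + Wmap A B T ζ := by
  obtain ⟨C, hC0, hC⟩ := exists_adjOut_bound A B T
  have h1 : adjOut A B T (η + ζ) = fun s => adjOut A B T η s + adjOut A B T ζ s :=
    funext fun s => adjOut_add A B T η ζ s
  rw [Wmap, h1, reachOutput_add A B T (measurable_adjOut A B T η) (measurable_adjOut A B T ζ)
    (adjOut_ae_bound A B T η (fun t ht => hC η t ht))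
    (adjOut_ae_bound A B T ζ (fun t ht => hC ζ t ht))]
  rfl

lemma Wmap_smul (c : ℝ) (η : EuclideanSpace ℝ (Fin n)) :
    Wmap A B T (c • η) = c • Wmap A B T η := by
  have h1 : adjOut A B T (c • η) = fun s => c • adjOut A B T η s :=
    funext fun s => adjOut_smul A B T c η s
  rw [Wmap, h1, reachOutput_smul]
  rfl

lemma perp_of_Wmap_eq_zero {hTpos : 0 < T} {η : EuclideanSpace ℝ (Fin n)}
    (hW : Wmap A B T η = 0) : η ∈ (Rinf A B)ᗮ := by
  have h1 : ∫ t in Ioc (0 : ℝ) T, ‖adjOut A B T η t‖ ^ 2 = 0 := by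
    have h2 := inner_Wmap A B T η η
    rw [hW] at h2
    simp only [inner_zero_left] at h2
    have h4 : ∫ t in Ioc (0 : ℝ) T, ⟪adjOut A B T η t, adjOut A B T η t⟫
        = ∫ t in Ioc (0 : ℝ) T, ‖adjOut A B T η t‖ ^ 2 := by
      apply setIntegral_congr_fun measurableSet_Ioc
      intro t _
      show ⟪adjOut A B T η t, adjOut A B T η t⟫ = ‖adjOut A B T η t‖ ^ 2
      rw [real_inner_self_eq_norm_sq]
    rw [← h4, ← h2]
  have h3 : ∀ t ∈ Ioo (0 : ℝ) T, ‖adjOut A B T η t‖ ^ 2 = 0 :=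
    zero_on_Ioo_of_integral_zero T
      (((continuous_adjOut A B T η).norm).pow 2) (fun t => by positivity) h1
  apply perp_of_adjOut_eq_zero A B hTpos
  intro t ht
  have := h3 t ht
  rwa [pow_eq_zero_iff (two_ne_zero), norm_eq_zero] at this

/-- The Gramian as a linear map. -/
def WLin : EuclideanSpace ℝ (Fin n) →ₗ[ℝ] EuclideanSpace ℝ (Fin n) where
  toFun := Wmap A B T
  map_add' := Wmap_add A B T
  map_smul' := Wmap_smul A B T

/-- The Gramian restricted to `Rinf`. -/
def WRes : Rinf A B →ₗ[ℝ] Rinf A B :=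
  ((WLin A B T).comp (Rinf A B).subtype).codRestrict _ fun x => Wmap_mem_Rinf A B T x

lemma WRes_injective (hTpos : 0 < T) : Function.Injective (WRes A B T) := by
  rw [← LinearMap.ker_eq_bot]
  rw [Submodule.eq_bot_iff]
  rintro ⟨x, hx⟩ hker
  have h0 : Wmap A B T x = 0 := by
    have := congrArg Subtype.val hker
    exact this
  have hperp : x ∈ (Rinf A B)ᗮ := perp_of_Wmap_eq_zero A B T (hTpos := hTpos) h0
  have : x = 0 := by
    have h1 := hperp x hx
    rwa [real_inner_self_eq_norm_sq, pow_eq_zero_iff (two_ne_zero), norm_eq_zero] at h1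
  exact Subtype.ext this

lemma exists_W_inverse_bound (hTpos : 0 < T) : ∃ C : ℝ, 0 ≤ C ∧
    ∀ x : EuclideanSpace ℝ (Fin n), x ∈ Rinf A B →
      ∃ η : EuclideanSpace ℝ (Fin n), Wmap A B T η = x ∧ ‖η‖ ≤ C * ‖x‖ := by
  have hinj := WRes_injective A B T hTpos
  have hsurj : Function.Surjective (WRes A B T) :=
    LinearMap.injective_iff_surjective.1 hinj
  set e : Rinf A B ≃ₗ[ℝ] Rinf A B := LinearEquiv.ofBijective (WRes A B T) ⟨hinj, hsurj⟩
  set L : Rinf A B →L[ℝ] Rinf A B := LinearMap.toContinuousLinearMap (e.symm.toLinearMap)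
  refine ⟨‖L‖, L.opNorm_nonneg, fun x hx => ?_⟩
  set xR : Rinf A B := ⟨x, hx⟩
  refine ⟨(e.symm xR : EuclideanSpace ℝ (Fin n)), ?_, ?_⟩
  · have h1 : WRes A B T (e.symm xR) = xR := e.apply_symm_apply xR
    have := congrArg Subtype.val h1
    exact this
  · have h2 : ‖e.symm xR‖ ≤ ‖L‖ * ‖xR‖ := L.le_opNorm xR
    exact h2

end WSection

section MainAssembly

variable (A : Matrix (Fin n) (Fin n) ℝ) (B : Matrix (Fin n) (Fin m) ℝ) (T : ℝ)

/-- `∫₀ᵀ ‖B^⊤ e^{(T-t)A^⊤} z‖ dt`. -/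
def hInt (z : EuclideanSpace ℝ (Fin n)) : ℝ := ∫ t in Ioc (0 : ℝ) T, ‖adjOut A B T z t‖

lemma hInt_nonneg (z : EuclideanSpace ℝ (Fin n)) : 0 ≤ hInt A B T z :=
  integral_nonneg fun t => norm_nonneg _

lemma hInt_neg (z : EuclideanSpace ℝ (Fin n)) : hInt A B T (-z) = hInt A B T z := by
  unfold hInt
  apply setIntegral_congr_fun measurableSet_Ioc
  intro t _
  show ‖adjOut A B T (-z) t‖ = ‖adjOut A B T z t‖
  rw [adjOut_neg, norm_neg]

lemma hInt_pos (hT : 0 < T) {z : EuclideanSpace ℝ (Fin n)}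
    (hz : ∃ t ∈ Ioo (0 : ℝ) T, adjOut A B T z t ≠ 0) : 0 < hInt A B T z := by
  rcases (hInt_nonneg A B T z).lt_or_eq with h | h
  · exact h
  · exfalso
    obtain ⟨t, ht, hne⟩ := hz
    have h0 := zero_on_Ioo_of_integral_zero T (continuous_adjOut A B T z).norm
      (fun t => norm_nonneg _) h.symm t ht
    exact hne (norm_eq_zero.1 h0)

lemma integrable_inner_adjOut {v : ℝ → EuclideanSpace ℝ (Fin m)} (hv : Measurable v) {c : ℝ}
    (hb : ∀ᵐ t ∂(volume.restrict (Ioo (0 : ℝ) T)), ‖v t‖ ≤ c) (z : EuclideanSpace ℝ (Fin n)) :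
    IntegrableOn (fun s => ⟪v s, adjOut A B T z s⟫) (Ioc (0 : ℝ) T) := by
  obtain ⟨CA, hCA0, hCA⟩ := exists_adjOut_bound A B T
  have hb' : ∀ᵐ t ∂(volume.restrict (Ioc (0 : ℝ) T)), ‖v t‖ ≤ c := by
    rwa [← Measure.restrict_congr_set Ioo_ae_eq_Ioc]
  refine Integrable.mono' (g := fun _ => c * (CA * ‖z‖)) ?_ ?_ ?_
  · exact integrableOn_const (C := c * (CA * ‖z‖)) measure_Ioc_lt_top.ne
  · exact (hv.inner (measurable_adjOut A B T z)).aestronglyMeasurable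
  · filter_upwards [hb', ae_restrict_mem measurableSet_Ioc] with t htb htm
    have h1 : |⟪v t, adjOut A B T z t⟫| ≤ ‖v t‖ * ‖adjOut A B T z t‖ :=
      abs_real_inner_le_norm _ _
    have h2 : ‖adjOut A B T z t‖ ≤ CA * ‖z‖ := hCA z t (Ioc_subset_Icc_self htm)
    have hv0 : 0 ≤ ‖v t‖ := norm_nonneg _
    have hc : 0 ≤ c := le_trans hv0 htb
    calc ‖⟪v t, adjOut A B T z t⟫‖ = |⟪v t, adjOut A B T z t⟫| := rfl
      _ ≤ ‖v t‖ * ‖adjOut A B T z t‖ := h1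
      _ ≤ c * (CA * ‖z‖) :=
          mul_le_mul htb h2 (norm_nonneg _) hc

lemma integrable_norm_adjOut (z : EuclideanSpace ℝ (Fin n)) :
    IntegrableOn (fun t => ‖adjOut A B T z t‖) (Ioc (0 : ℝ) T) :=
  (continuous_adjOut A B T z).norm.integrableOn_Ioc

/-- Key inequality for the easy direction. -/
lemma inner_le_supNorm_mul_hInt {v : ℝ → EuclideanSpace ℝ (Fin m)} (hv : Measurable v) {c : ℝ}
    (hc : 0 ≤ c) (hb : ∀ᵐ t ∂(volume.restrict (Ioo (0 : ℝ) T)), ‖v t‖ ≤ c)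
    (z : EuclideanSpace ℝ (Fin n)) :
    -⟪reachOutput A B T v, z⟫ ≤ c * hInt A B T z := by
  rw [inner_reachOutput A B T hv hb z, ← integral_neg]
  have hintg : IntegrableOn (fun s => -⟪v s, adjOut A B T z s⟫) (Ioc (0 : ℝ) T) :=
    (integrable_inner_adjOut A B T hv hb z).neg
  have hintg2 : IntegrableOn (fun s => c * ‖adjOut A B T z s‖) (Ioc (0 : ℝ) T) :=
    (integrable_norm_adjOut A B T z).const_mul c
  have hmono : ∀ᵐ s ∂(volume.restrict (Ioc (0 : ℝ) T)),
      -⟪v s, adjOut A B T z s⟫ ≤ c * ‖adjOut A B T z s‖ := by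
    have hb' : ∀ᵐ t ∂(volume.restrict (Ioc (0 : ℝ) T)), ‖v t‖ ≤ c := by
      rwa [← Measure.restrict_congr_set Ioo_ae_eq_Ioc]
    filter_upwards [hb'] with s hs
    have h1 : |⟪v s, adjOut A B T z s⟫| ≤ ‖v s‖ * ‖adjOut A B T z s‖ :=
      abs_real_inner_le_norm _ _
    have h2 : -⟪v s, adjOut A B T z s⟫ ≤ |⟪v s, adjOut A B T z s⟫| := neg_le_abs _
    refine h2.trans (h1.trans ?_)
    exact mul_le_mul_of_nonneg_right hs (norm_nonneg _)
  calc ∫ s in Ioc (0 : ℝ) T, -⟪v s, adjOut A B T z s⟫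
      ≤ ∫ s in Ioc (0 : ℝ) T, c * ‖adjOut A B T z s‖ := integral_mono_ae hintg hintg2 hmono
    _ = c * hInt A B T z := by
        rw [hInt, ← smul_eq_mul, ← integral_smul]
        apply setIntegral_congr_fun measurableSet_Ioc
        intro s _
        simp [smul_eq_mul]

open Classical in
/-- The optimal-direction control. -/
def optCtrl (c : ℝ) (z : EuclideanSpace ℝ (Fin n)) : ℝ → EuclideanSpace ℝ (Fin m) :=
  fun t => if adjOut A B T z t = 0 then 0
    else (c / ‖adjOut A B T z t‖) • adjOut A B T z t

lemma optCtrl_measurable (c : ℝ) (z : EuclideanSpace ℝ (Fin n)) :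
    Measurable (optCtrl A B T c z) := by
  have hset : MeasurableSet {t : ℝ | adjOut A B T z t = 0} :=
    (isClosed_singleton.preimage (continuous_adjOut A B T z)).measurableSet
  refine Measurable.ite hset measurable_const ?_
  have h1 : Measurable fun t => (c / ‖adjOut A B T z t‖) :=
    (measurable_const.div ((continuous_adjOut A B T z).norm.measurable))
  exact h1.smul (measurable_adjOut A B T z)

lemma optCtrl_norm_le {c : ℝ} (hc : 0 ≤ c) (z : EuclideanSpace ℝ (Fin n)) (t : ℝ) :
    ‖optCtrl A B T c z t‖ ≤ c := by
  rw [optCtrl]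
  split_ifs with h
  · simpa using hc
  · have hr : 0 < ‖adjOut A B T z t‖ := norm_pos_iff.2 h
    rw [norm_smul, Real.norm_eq_abs, abs_div, abs_of_nonneg hc,
      abs_of_nonneg (norm_nonneg _), div_mul_cancel₀]
    exact hr.ne'

lemma optCtrl_inner (c : ℝ) (z : EuclideanSpace ℝ (Fin n)) (t : ℝ) :
    ⟪optCtrl A B T c z t, adjOut A B T z t⟫ = c * ‖adjOut A B T z t‖ := by
  rw [optCtrl]
  split_ifs with h
  · simp [h]
  · have hr : 0 < ‖adjOut A B T z t‖ := norm_pos_iff.2 h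
    rw [real_inner_smul_left, real_inner_self_eq_norm_sq]
    field_simp

lemma inner_reachOutput_optCtrl {c : ℝ} (hc : 0 ≤ c) (z : EuclideanSpace ℝ (Fin n)) :
    ⟪reachOutput A B T (optCtrl A B T c z), z⟫ = c * hInt A B T z := by
  rw [inner_reachOutput A B T (optCtrl_measurable A B T c z)
    (Filter.Eventually.of_forall fun t => optCtrl_norm_le A B T hc z t) z]
  rw [hInt, ← smul_eq_mul, ← integral_smul]
  apply setIntegral_congr_fun measurableSet_Ioc
  intro t _
  show ⟪optCtrl A B T c z t, adjOut A B T z t⟫ = c • ‖adjOut A B T z t‖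
  rw [smul_eq_mul]
  exact optCtrl_inner A B T c z t

/-- The bounded reachable sets. -/
def KSet (c : ℝ) : Set (EuclideanSpace ℝ (Fin n)) :=
  {x | ∃ v : ℝ → EuclideanSpace ℝ (Fin m), Measurable v ∧
    (∀ᵐ t ∂(volume.restrict (Ioo (0 : ℝ) T)), ‖v t‖ ≤ c) ∧ reachOutput A B T v = x}

lemma zero_mem_KSet {c : ℝ} (hc : 0 ≤ c) : (0 : EuclideanSpace ℝ (Fin n)) ∈ KSet A B T c :=
  ⟨fun _ => 0, measurable_const, Filter.Eventually.of_forall fun _ => by simpa using hc,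
    reachOutput_zero A B T⟩

lemma KSet_convex (c : ℝ) : Convex ℝ (KSet A B T c) := by
  rintro x ⟨v, hv, hbv, rfl⟩ y ⟨w, hw, hbw, rfl⟩ a b ha hb hab
  refine ⟨fun s => a • v s + b • w s, ((hv.const_smul a).add (hw.const_smul b)), ?_, ?_⟩
  · filter_upwards [hbv, hbw] with t h1 h2
    calc ‖a • v t + b • w t‖ ≤ ‖a • v t‖ + ‖b • w t‖ := norm_add_le _ _
      _ = a * ‖v t‖ + b * ‖w t‖ := by
          rw [norm_smul, norm_smul, Real.norm_eq_abs, Real.norm_eq_abs,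
            abs_of_nonneg ha, abs_of_nonneg hb]
      _ ≤ a * c + b * c := add_le_add (mul_le_mul_of_nonneg_left h1 ha)
          (mul_le_mul_of_nonneg_left h2 hb)
      _ = c := by rw [← add_mul, hab, one_mul]
  · have hbv' : ∀ᵐ t ∂(volume.restrict (Ioo (0 : ℝ) T)), ‖a • v t‖ ≤ |a| * c := by
      filter_upwards [hbv] with t h1
      rw [norm_smul, Real.norm_eq_abs]
      exact mul_le_mul_of_nonneg_left h1 (abs_nonneg a)
    have hbw' : ∀ᵐ t ∂(volume.restrict (Ioo (0 : ℝ) T)), ‖b • w t‖ ≤ |b| * c := by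
      filter_upwards [hbw] with t h1
      rw [norm_smul, Real.norm_eq_abs]
      exact mul_le_mul_of_nonneg_left h1 (abs_nonneg b)
    have hva : Measurable fun s => a • v s := hv.const_smul a
    have hwb : Measurable fun s => b • w s := hw.const_smul b
    calc reachOutput A B T (fun s => a • v s + b • w s)
        = reachOutput A B T (fun s => a • v s) + reachOutput A B T (fun s => b • w s) :=
          reachOutput_add A B T hva hwb hbv' hbw'
      _ = a • reachOutput A B T v + b • reachOutput A B T w := by
          rw [reachOutput_smul, reachOutput_smul]

lemma KSet_subset_Rinf (c : ℝ) : KSet A B T c ⊆ (Rinf A B : Set (EuclideanSpace ℝ (Fin n))) := by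
  rintro x ⟨v, hv, hbv, rfl⟩
  exact reachOutput_mem_Rinf A B T hv hbv

end MainAssembly

section Final

variable (A : Matrix (Fin n) (Fin n) ℝ) (B : Matrix (Fin n) (Fin m) ℝ)

lemma exists_admissible {T : ℝ} (hT : 0 < T) {y0 : EuclideanSpace ℝ (Fin n)}
    (hy0R : y0 ∈ reach A B) :
    ∃ v : ℝ → EuclideanSpace ℝ (Fin m), NPAdmissible A B T y0 v := by
  have hx : -(mulVecE (NormedSpace.exp (T • A)) y0) ∈ Rinf A B :=
    Submodule.neg_mem _ (mulVecE_exp_mem_Rinf A B (reach_le_Rinf A B hy0R) T)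
  obtain ⟨C, hC0, hCinv⟩ := exists_W_inverse_bound A B T hT
  obtain ⟨η, hWη, hηb⟩ := hCinv _ hx
  obtain ⟨CA, hCA0, hCA⟩ := exists_adjOut_bound A B T
  refine ⟨adjOut A B T η, measurable_adjOut A B T η, ?_, ?_⟩
  · exact supNorm_lt_top_of_bound T (adjOut_ae_bound A B T η (fun t ht => hCA η t ht))
  · show mulVecE (NormedSpace.exp (T • A)) y0 + reachOutput A B T (adjOut A B T η) = 0
    rw [show reachOutput A B T (adjOut A B T η) = Wmap A B T η from rfl, hWη]
    simp

lemma Nmin_ne_top {T : ℝ} (hT : 0 < T) {y0 : EuclideanSpace ℝ (Fin n)}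
    (hy0R : y0 ∈ reach A B) : Nmin A B T y0 ≠ ⊤ := by
  obtain ⟨v, hv⟩ := exists_admissible A B hT hy0R
  have h1 : Nmin A B T y0 ≤ supNorm T v := iInf₂_le v hv
  exact (h1.trans_lt hv.2.1).ne

lemma ratio_le_N {T : ℝ} (hT : 0 < T) {y0 : EuclideanSpace ℝ (Fin n)}
    (hy0R : y0 ∈ reach A B) (z : EuclideanSpace ℝ (Fin n))
    (hz : ∃ t ∈ Ioo (0 : ℝ) T, adjOut A B T z t ≠ 0) :
    ⟪mulVecE (NormedSpace.exp (T • A)) y0, z⟫ / hInt A B T z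
      ≤ (Nmin A B T y0).toReal := by
  have hNt : Nmin A B T y0 ≠ ⊤ := Nmin_ne_top A B hT hy0R
  have hpos : 0 < hInt A B T z := hInt_pos A B T hT hz
  rw [div_le_iff₀ hpos]
  -- for every admissible control
  have key : ∀ v : ℝ → EuclideanSpace ℝ (Fin m), NPAdmissible A B T y0 v →
      ⟪mulVecE (NormedSpace.exp (T • A)) y0, z⟫
        ≤ (supNorm T v).toReal * hInt A B T z := by
    rintro v ⟨hm, hfin, hst⟩
    have hb := ae_bound_of_supNorm T hfin.ne
    have h1 : mulVecE (NormedSpace.exp (T • A)) y0 = -(reachOutput A B T v) :=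
      eq_neg_of_add_eq_zero_left hst
    rw [h1, inner_neg_left]
    exact inner_le_supNorm_mul_hInt A B T hm ENNReal.toReal_nonneg hb z
  refine le_of_forall_pos_le_add fun ε hε => ?_
  set δ : ℝ := ε / hInt A B T z with hδdef
  have hδ : 0 < δ := div_pos hε hpos
  have hlt : Nmin A B T y0 < Nmin A B T y0 + ENNReal.ofReal δ :=
    ENNReal.lt_add_right hNt (ENNReal.ofReal_pos.2 hδ).ne'
  have hex : ∃ v, ∃ _ : NPAdmissible A B T y0 v,
      supNorm T v < Nmin A B T y0 + ENNReal.ofReal δ := by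
    have h2 : Nmin A B T y0 < Nmin A B T y0 + ENNReal.ofReal δ := hlt
    rw [Nmin, iInf_lt_iff] at h2
    obtain ⟨v, hv⟩ := h2
    rw [iInf_lt_iff] at hv
    obtain ⟨hadm, hv'⟩ := hv
    exact ⟨v, hadm, hv'⟩
  obtain ⟨v, hadm, hvlt⟩ := hex
  have hfin : supNorm T v ≠ ⊤ := hadm.2.1.ne
  have h3 : (supNorm T v).toReal ≤ (Nmin A B T y0).toReal + δ := by
    have h4 := ENNReal.toReal_mono (by finiteness) hvlt.le
    rwa [ENNReal.toReal_add hNt ENNReal.ofReal_ne_top, ENNReal.toReal_ofReal hδ.le] at h4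
  calc ⟪mulVecE (NormedSpace.exp (T • A)) y0, z⟫
      ≤ (supNorm T v).toReal * hInt A B T z := key v hadm
    _ ≤ ((Nmin A B T y0).toReal + δ) * hInt A B T z :=
        mul_le_mul_of_nonneg_right h3 hpos.le
    _ = (Nmin A B T y0).toReal * hInt A B T z + ε := by
        rw [add_mul, hδdef, div_mul_cancel₀ _ hpos.ne']

lemma exists_adjOut_ne_zero {T : ℝ} (hB : B ≠ 0) (hT : 0 < T) :
    ∃ z : EuclideanSpace ℝ (Fin n), ∃ t ∈ Ioo (0 : ℝ) T, adjOut A B T z t ≠ 0 := by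
  have hBT : ∃ i j, B i j ≠ 0 := by
    by_contra h
    push_neg at h
    apply hB
    ext i j
    simpa using h i j
  obtain ⟨i, j, hij⟩ := hBT
  set t0 : ℝ := T / 2 with ht0def
  have ht0 : t0 ∈ Ioo (0 : ℝ) T := ⟨by positivity, by rw [ht0def]; linarith⟩
  set M : Matrix (Fin n) (Fin n) ℝ := (T - t0) • Aᵀ with hM
  refine ⟨mulVecE (NormedSpace.exp (-M)) (EuclideanSpace.single i 1), t0, ht0, ?_⟩
  have hcomm : Commute M (-M) := (Commute.refl M).neg_right
  have hexp : NormedSpace.exp M * NormedSpace.exp (-M) = 1 := by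
    rw [← Matrix.exp_add_of_commute M (-M) hcomm, add_neg_cancel, NormedSpace.exp_zero]
  have hval : adjOut A B T (mulVecE (NormedSpace.exp (-M)) (EuclideanSpace.single i 1)) t0
      = mulVecE Bᵀ (EuclideanSpace.single i 1) := by
    rw [adjOut, ← hM, mulVecE_mulVecE (NormedSpace.exp M) (NormedSpace.exp (-M)), hexp,
      mulVecE_one]
  rw [hval]
  intro h0
  have h1 : mulVecE Bᵀ (EuclideanSpace.single i 1) j = (0 : EuclideanSpace ℝ (Fin m)) j :=
    congrArg (fun v => v j) h0
  rw [show ((0 : EuclideanSpace ℝ (Fin m)) j) = 0 from rfl] at h1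
  apply hij
  rw [← h1]
  simp [mulVecE, Matrix.mulVec, dotProduct, EuclideanSpace.single_apply]

end Final

/-- For every `y₀ ∈ ℛ \ {0}` and `T ∈ (0,∞)` the minimal norm `N(T,y₀)`
is finite and equals
`sup{ ⟨e^{TA}y₀, z⟩ / ∫₀ᵀ ‖B^⊤ e^{(T-t)A^⊤} z‖ dt : z ∈ ℝⁿ, t ↦ B^⊤ e^{(T-t)A^⊤} z` not
identically zero on `(0,T) }`. -/
theorem statement7 {n m : ℕ} (hn : 1 ≤ n) (hm : 1 ≤ m)
    (A : Matrix (Fin n) (Fin n) ℝ) (B : Matrix (Fin n) (Fin m) ℝ) (hB : B ≠ 0)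
    (y0 : EuclideanSpace ℝ (Fin n)) (hy0R : y0 ∈ reach A B) (hy0 : y0 ≠ 0)
    (T : ℝ) (hT : 0 < T) :
    Nmin A B T y0 ≠ ⊤ ∧
    (Nmin A B T y0).toReal =
      sSup {r : ℝ | ∃ z : EuclideanSpace ℝ (Fin n),
        (∃ t ∈ Ioo (0 : ℝ) T, adjOut A B T z t ≠ 0) ∧
        r = ⟪mulVecE (NormedSpace.exp (T • A)) y0, z⟫ /
              ∫ t in Ioc (0 : ℝ) T, ‖adjOut A B T z t‖} := by
  classical
  have hNt : Nmin A B T y0 ≠ ⊤ := Nmin_ne_top A B hT hy0R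
  refine ⟨hNt, ?_⟩
  set SS : Set ℝ := {r : ℝ | ∃ z : EuclideanSpace ℝ (Fin n),
      (∃ t ∈ Ioo (0 : ℝ) T, adjOut A B T z t ≠ 0) ∧
      r = ⟪mulVecE (NormedSpace.exp (T • A)) y0, z⟫ /
            ∫ t in Ioc (0 : ℝ) T, ‖adjOut A B T z t‖} with hSS
  set N : ℝ := (Nmin A B T y0).toReal with hN
  have hmemle : ∀ r ∈ SS, r ≤ N := by
    rintro r ⟨z, hz, rfl⟩
    exact ratio_le_N A B hT hy0R z hz
  have hbdd : BddAbove SS := ⟨N, hmemle⟩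
  obtain ⟨z0, hz0⟩ := exists_adjOut_ne_zero A B hB hT
  have hneg : ∀ r ∈ SS, -r ∈ SS := by
    rintro r ⟨z, ⟨t, ht, htne⟩, rfl⟩
    refine ⟨-z, ⟨t, ht, by rw [adjOut_neg]; exact neg_ne_zero.2 htne⟩, ?_⟩
    have hd : (∫ t in Ioc (0 : ℝ) T, ‖adjOut A B T (-z) t‖)
        = ∫ t in Ioc (0 : ℝ) T, ‖adjOut A B T z t‖ := hInt_neg A B T z
    rw [hd, inner_neg_right, neg_div]
  have hr0 : (⟪mulVecE (NormedSpace.exp (T • A)) y0, z0⟫ /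
      ∫ t in Ioc (0 : ℝ) T, ‖adjOut A B T z0 t‖) ∈ SS := ⟨z0, hz0, rfl⟩
  have hsup0 : 0 ≤ sSup SS := by
    have h1 := le_csSup hbdd hr0
    have h2 := le_csSup hbdd (hneg _ hr0)
    linarith
  refine le_antisymm ?_ (Real.sSup_le hmemle ENNReal.toReal_nonneg)
  by_contra hcon
  push_neg at hcon
  set Sstar : ℝ := sSup SS with hSstar
  set δ : ℝ := (N - Sstar) / 3 with hδdef
  have hδ : 0 < δ := by
    rw [hδdef]
    linarith
  set c' : ℝ := Sstar + δ with hc'def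
  have hc'0 : 0 < c' := by rw [hc'def]; linarith
  set c : ℝ := Sstar + 2 * δ with hcdef
  set x : EuclideanSpace ℝ (Fin n) := -(mulVecE (NormedSpace.exp (T • A)) y0) with hxdef
  have hx : x ∈ Rinf A B :=
    Submodule.neg_mem _ (mulVecE_exp_mem_Rinf A B (reach_le_Rinf A B hy0R) T)
  have hclos : x ∈ closure (KSet A B T c') := by
    by_contra hxcl
    obtain ⟨f, u, hfu, hux⟩ := geometric_hahn_banach_closed_point
      ((KSet_convex A B T c').closure) isClosed_closure hxcl
    set z := (InnerProductSpace.toDual ℝ (EuclideanSpace ℝ (Fin n))).symm f with hzdef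
    have hfz : ∀ w : EuclideanSpace ℝ (Fin n), ⟪z, w⟫ = f w := fun w =>
      InnerProductSpace.toDual_symm_apply
    have hu0 : 0 < u := by
      have h1 := hfu 0 (subset_closure (zero_mem_KSet A B T hc'0.le))
      rwa [map_zero] at h1
    by_cases hzc : ∃ t ∈ Ioo (0 : ℝ) T, adjOut A B T z t ≠ 0
    · have hpos := hInt_pos A B T hT hzc
      have hkmem : reachOutput A B T (optCtrl A B T c' z) ∈ KSet A B T c' :=
        ⟨optCtrl A B T c' z, optCtrl_measurable A B T c' z,
          Filter.Eventually.of_forall fun t => optCtrl_norm_le A B T hc'0.le z t, rfl⟩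
      have h1 : f (reachOutput A B T (optCtrl A B T c' z)) < u := hfu _ (subset_closure hkmem)
      rw [← hfz] at h1
      have h3 : ⟪z, reachOutput A B T (optCtrl A B T c' z)⟫ = c' * hInt A B T z := by
        rw [real_inner_comm (reachOutput A B T (optCtrl A B T c' z)) z]
        exact inner_reachOutput_optCtrl A B T hc'0.le z
      have h2 : c' * hInt A B T z < u := by rw [← h3]; exact h1
      have hfx : ⟪x, z⟫ = f x := by
        rw [← hfz x]
        exact real_inner_comm z x
      set r : ℝ := ⟪mulVecE (NormedSpace.exp (T • A)) y0, -z⟫ /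
          ∫ t in Ioc (0 : ℝ) T, ‖adjOut A B T (-z) t‖ with hrdef
      have hrS : r ∈ SS := by
        obtain ⟨t, ht, hne⟩ := hzc
        exact ⟨-z, ⟨t, ht, by rw [adjOut_neg]; exact neg_ne_zero.2 hne⟩, rfl⟩
      have hrval : r = ⟪x, z⟫ / hInt A B T z := by
        have h4 : r = ⟪mulVecE (NormedSpace.exp (T • A)) y0, -z⟫ / hInt A B T (-z) := rfl
        rw [h4, hInt_neg, inner_neg_right, hxdef, inner_neg_left]
      have hc'r : c' < r := by
        rw [hrval, lt_div_iff₀ hpos]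
        have h5 : u < ⟪x, z⟫ := by rw [hfx]; exact hux
        linarith
      have hrS' : r ≤ Sstar := le_csSup hbdd hrS
      rw [hc'def] at hc'r
      linarith
    · push_neg at hzc
      have hzperp := perp_of_adjOut_eq_zero A B hT hzc
      have h0 : ⟪x, z⟫ = 0 := hzperp x hx
      have h1 : f x = 0 := by
        rw [← hfz x, real_inner_comm x z]
        exact h0
      rw [h1] at hux
      linarith
  obtain ⟨CW, hCW0, hCWinv⟩ := exists_W_inverse_bound A B T hT
  obtain ⟨CA, hCA0, hCA⟩ := exists_adjOut_bound A B T
  set K : ℝ := CW * CA with hK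
  have hK0 : 0 ≤ K := mul_nonneg hCW0 hCA0
  set ε : ℝ := δ / (K + 1) with hε
  have hε0 : 0 < ε := div_pos hδ (by linarith)
  obtain ⟨k, hkK, hdist⟩ := Metric.mem_closure_iff.1 hclos ε hε0
  obtain ⟨w, hwm, hwb, hwr⟩ := hkK
  have hkR : k ∈ Rinf A B := by
    rw [← hwr]
    exact reachOutput_mem_Rinf A B T hwm hwb
  have he : x - k ∈ Rinf A B := Submodule.sub_mem _ hx hkR
  obtain ⟨η, hWη, hηb⟩ := hCWinv _ he
  have hxk : ‖x - k‖ < ε := by rwa [← dist_eq_norm]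
  have hηb2 : ‖η‖ ≤ CW * ε := hηb.trans (mul_le_mul_of_nonneg_left hxk.le hCW0)
  have hKεδ : K * ε ≤ δ := by
    rw [hε, mul_div_assoc']
    rw [div_le_iff₀ (by linarith : (0:ℝ) < K + 1)]
    nlinarith
  have hadjb : ∀ t ∈ Icc (0 : ℝ) T, ‖adjOut A B T η t‖ ≤ δ := by
    intro t ht
    calc ‖adjOut A B T η t‖ ≤ CA * ‖η‖ := hCA η t ht
      _ ≤ CA * (CW * ε) := mul_le_mul_of_nonneg_left hηb2 hCA0
      _ = K * ε := by rw [hK]; ring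
      _ ≤ δ := hKεδ
  set u0 : ℝ → EuclideanSpace ℝ (Fin m) := fun s => w s + adjOut A B T η s with hu0def
  have hu0m : Measurable u0 := hwm.add (measurable_adjOut A B T η)
  have hu0b : ∀ᵐ t ∂(volume.restrict (Ioo (0 : ℝ) T)), ‖u0 t‖ ≤ c := by
    filter_upwards [hwb, ae_restrict_mem measurableSet_Ioo] with t h1 h2
    calc ‖u0 t‖ ≤ ‖w t‖ + ‖adjOut A B T η t‖ := norm_add_le _ _
      _ ≤ c' + δ := add_le_add h1 (hadjb t (Ioo_subset_Icc_self h2))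
      _ = c := by rw [hcdef, hc'def]; ring
  have hu0r : reachOutput A B T u0 = x := by
    rw [hu0def, reachOutput_add A B T hwm (measurable_adjOut A B T η) hwb
      (adjOut_ae_bound A B T η (fun t ht => hadjb t ht)), hwr,
      show reachOutput A B T (adjOut A B T η) = Wmap A B T η from rfl, hWη, add_comm,
      sub_add_cancel]
  have hadm : NPAdmissible A B T y0 u0 := by
    refine ⟨hu0m, supNorm_lt_top_of_bound T hu0b, ?_⟩
    show mulVecE (NormedSpace.exp (T • A)) y0 + reachOutput A B T u0 = 0
    rw [hu0r, hxdef, add_neg_cancel]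
  have hle : Nmin A B T y0 ≤ ENNReal.ofReal c :=
    (iInf₂_le u0 hadm).trans (supNorm_le_ofReal T hu0b)
  have hNc : N ≤ c := by
    have h6 := ENNReal.toReal_mono ENNReal.ofReal_ne_top hle
    rwa [ENNReal.toReal_ofReal (by rw [hcdef]; linarith : (0:ℝ) ≤ c)] at h6
  rw [hcdef, hδdef] at hNc
  linarith


end ControlBBP
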